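/- Let ν be a Borel probability measure on 𝕋^d, z ∈ 𝕋^d, and ε ∈ (0, 1/4] with ν(B(z, ε)) > 0 and ν{x : dist(x, z) = ε} = 0. Let θ be the uniform probability measure on the closed Euclidean unit ball S of ℝ^d. For u ∈ ℝ set b_m = (1/d) · log(m · ν(B(z, ε)) / ε^d) and u_m = u/d + b_m. Then m · (ν ⊗ θ){(x, ξ) ∈ 𝕋^d × S : dist(x + εξ, z) < e^{−u_m}} → e^{−u} as m → ∞; in particular the linear normalizing sequence for the maximum process has scale a_m = d and location b_m = (1/d) log(m ν(B(z, ε))/ε^d). -/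

import Mathlib

open MeasureTheory Metric Set Filter Topology

noncomputable section

/-- The `d`-dimensional torus `(ℝ/ℤ)^d`. -/
abbrev Torus (d : ℕ) := Fin d → AddCircle (1 : ℝ)

/-- Translation of a torus point by a vector `w ∈ ℝ^d` (via the projection `ℝ^d → 𝕋^d`). -/
def tr {d : ℕ} (x : Torus d) (w : EuclideanSpace ℝ (Fin d)) : Torus d :=
  fun i => x i + (w i : AddCircle (1 : ℝ))

/-- The translation-invariant metric on the torus induced by the Euclidean norm on `ℝ^d`. -/
def tdist {d : ℕ} (x y : Torus d) : ℝ :=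
  Real.sqrt (∑ i, dist (x i) (y i) ^ 2)

/-- The open ball of center `p` and radius `r` in the torus, for the metric `tdist`. -/
def tball {d : ℕ} (p : Torus d) (r : ℝ) : Set (Torus d) := {y | tdist y p < r}

/-- The observable process `X_i(x, ξ̄) = -log dist(T^i x + ε ξ_i, z)`. -/
def Xobs {d : ℕ} (T : Torus d → Torus d) (z : Torus d) (ε : ℝ) (i : ℕ)
    (p : Torus d × (ℕ → EuclideanSpace ℝ (Fin d))) : ℝ :=
  - Real.log (tdist (tr (T^[i] p.1) (ε • p.2 i)) z)

/-- `Θ` is the infinite product measure `θ^{⊗ℕ}`: every finite-dimensional marginal of `Θ`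
is the corresponding finite product of copies of `θ`. -/
def IsIIDProduct {d : ℕ} (θ : Measure (EuclideanSpace ℝ (Fin d)))
    (Θ : Measure (ℕ → EuclideanSpace ℝ (Fin d))) : Prop :=
  ∀ n : ℕ, Θ.map (fun ξ (i : Fin n) => ξ i) = Measure.pi fun _ : Fin n => θ

/-- `(T, ν)` has polynomial decay of correlations with constant `C`:
for every `g ∈ L¹(ν)`, every bounded Borel `h` and every `t ≥ 1`,
`|∫ g ⬝ (h ∘ T^t) dν − (∫ g dν)(∫ h dν)| ≤ C ‖h‖_∞ ‖g‖_{L¹(ν)} t^{-2}`. -/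
def DecayCor {d : ℕ} (T : Torus d → Torus d) (ν : Measure (Torus d)) (C : ℝ) : Prop :=
  ∀ g : Torus d → ℝ, Integrable g ν →
    ∀ h : Torus d → ℝ, Measurable h → ∀ K : ℝ, (∀ x, |h x| ≤ K) →
      ∀ t : ℕ, 1 ≤ t →
        |(∫ x, g x * h (T^[t] x) ∂ν) - (∫ x, g x ∂ν) * ∫ x, h x ∂ν| ≤
          C * K * (∫ x, |g x| ∂ν) / (t : ℝ) ^ 2

/-- The uniform probability measure on the closed Euclidean unit ball of `ℝ^d`. -/
def unifBall (d : ℕ) : Measure (EuclideanSpace ℝ (Fin d)) :=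
  (volume (Metric.closedBall (0 : EuclideanSpace ℝ (Fin d)) 1))⁻¹ •
    volume.restrict (Metric.closedBall 0 1)


/-!
For fixed `x`, write `z = x + c` with `c` the coordinatewise shortest lift, so `‖c‖ = dist(x, z)`.
Since `ε, r ≤ 1/4`, a point `ξ ∈ S` satisfies `dist(x + εξ, z) < r` only if `‖εξ - c‖ < r`, and
conversely `‖εξ - c‖ < r` forces both `dist(x + εξ, z) < r` and, when `dist(x, z) < ε - r`, `ξ ∈ S`.
So the `ξ`-slice has `θ`-measure `(r/ε)^d` when `dist(x, z) < ε - r`, at most `(r/ε)^d` when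
`dist(x, z) < ε + r`, and `0` otherwise; integrating in `x` sandwiches `(ν ⊗ θ)` of the set between
`(r/ε)^d ν(B(z, ε ∓ r))`. For `r = e^{-u_m}` one has `m (r/ε)^d = e^{-u} / ν(B(z, ε))`, and
`ν(B(z, ε ± r)) → ν(B(z, ε))` because the sphere of radius `ε` is `ν`-null.
-/

namespace AddCircle

lemma norm_coe_le_abs (p t : ℝ) : ‖(t : AddCircle p)‖ ≤ |t| :=
  QuotientAddGroup.norm_mk_le_norm

lemma norm_coe_eq_abs_of_abs_add_norm_lt {p t : ℝ} (hp : 0 < p)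
    (h : |t| + ‖(t : AddCircle p)‖ < p) : ‖(t : AddCircle p)‖ = |t| := by
  rw [norm_coe_eq_abs_iff p hp.ne', abs_of_pos hp]
  by_contra! hbig
  set n := round (p⁻¹ * t)
  have hn : n ≠ 0 := by
    intro h0
    obtain ⟨h1, h2⟩ := round_eq_zero_iff.1 h0
    have ht := mul_inv_cancel_left₀ hp.ne' t
    have : |t| ≤ p / 2 := abs_le.2 ⟨by nlinarith, by nlinarith⟩
    linarith
  have hnp : p ≤ |(n : ℝ) * p| := by
    rw [abs_mul, abs_of_pos hp, ← Int.cast_abs]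
    exact le_mul_of_one_le_left hp.le (by exact_mod_cast Int.one_le_abs hn)
  have := abs_sub_abs_le_abs_sub ((n : ℝ) * p) t
  rw [abs_sub_comm, ← norm_eq] at this
  linarith

lemma exists_coe_eq_of_abs_le (y : AddCircle (1 : ℝ)) :
    ∃ t : ℝ, (t : AddCircle (1 : ℝ)) = y ∧ |t| ≤ 1 / 2 := by
  obtain ⟨s, rfl⟩ := QuotientAddGroup.mk_surjective y
  refine ⟨s - round s, ?_, abs_sub_round s⟩
  have : ((round s : ℝ) : AddCircle (1 : ℝ)) = 0 := (coe_eq_zero_iff 1).2 ⟨round s, by simp⟩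
  rw [coe_sub, this, sub_zero]

end AddCircle

section TorusGeometry

variable {d : ℕ}

lemma dist_apply_le_tdist (x z : Torus d) (i : Fin d) : dist (x i) (z i) ≤ tdist x z :=
  Real.le_sqrt_of_sq_le <| Finset.single_le_sum (f := fun j => dist (x j) (z j) ^ 2)
    (fun _ _ => sq_nonneg _) (Finset.mem_univ i)

lemma tdist_tr_left (z : Torus d) (v : EuclideanSpace ℝ (Fin d)) :
    tdist (tr z v) z = √(∑ i, ‖(v i : AddCircle (1 : ℝ))‖ ^ 2) := by
  simp only [tdist, tr, dist_eq_norm, add_sub_cancel_left]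

lemma tdist_tr_left_le (z : Torus d) (v : EuclideanSpace ℝ (Fin d)) : tdist (tr z v) z ≤ ‖v‖ := by
  rw [tdist_tr_left, EuclideanSpace.norm_eq]
  gcongr with i
  exact AddCircle.norm_coe_le_abs 1 (v i)

lemma tdist_tr_left_eq_norm (z : Torus d) {v : EuclideanSpace ℝ (Fin d)}
    (hv : ∀ i, ‖(v i : AddCircle (1 : ℝ))‖ = |v i|) : tdist (tr z v) z = ‖v‖ := by
  simp only [tdist_tr_left, EuclideanSpace.norm_eq, hv, Real.norm_eq_abs]

lemma tdist_tr_left_eq_norm_of_abs_add_lt (z : Torus d) {v : EuclideanSpace ℝ (Fin d)}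
    (hv : ∀ i, |v i| + tdist (tr z v) z < 1) : tdist (tr z v) z = ‖v‖ := by
  refine tdist_tr_left_eq_norm z fun i => AddCircle.norm_coe_eq_abs_of_abs_add_norm_lt one_pos ?_
  have : ‖(v i : AddCircle (1 : ℝ))‖ ≤ tdist (tr z v) z := by
    simpa [tr, dist_eq_norm] using dist_apply_le_tdist (tr z v) z i
  linarith [hv i]

lemma tr_eq_tr_sub {x z : Torus d} {c : EuclideanSpace ℝ (Fin d)} (hc : tr x c = z)
    (w : EuclideanSpace ℝ (Fin d)) : tr x w = tr z (w - c) := by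
  subst hc
  funext i
  simp only [tr, PiLp.sub_apply, AddCircle.coe_sub]
  abel

lemma exists_tr_eq (x z : Torus d) :
    ∃ c : EuclideanSpace ℝ (Fin d), tr x c = z ∧ (∀ i, |c i| ≤ 1 / 2) ∧ ‖c‖ = tdist x z := by
  choose t ht hle using fun i => AddCircle.exists_coe_eq_of_abs_le (z i - x i)
  have hx : tr z (-WithLp.toLp 2 t) = x := by
    funext i
    simp [tr, ht]
  refine ⟨WithLp.toLp 2 t, ?_, hle, ?_⟩
  · funext i
    simp [tr, ht]
  · rw [← hx, tdist_tr_left_eq_norm, norm_neg]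
    intro i
    rw [AddCircle.norm_coe_eq_abs_iff 1 one_ne_zero, abs_one]
    simpa using hle i

end TorusGeometry

section Slices

variable {d : ℕ} {ε r : ℝ} {x z : Torus d} {c ξ : EuclideanSpace ℝ (Fin d)}

lemma mem_ball_inv_smul_iff (hε : 0 < ε) : ξ ∈ ball (ε⁻¹ • c) (r / ε) ↔ ‖ε • ξ - c‖ < r := by
  have : ε • ξ - c = ε • (ξ - ε⁻¹ • c) := by
    rw [smul_sub, smul_inv_smul₀ hε.ne']
  rw [mem_ball, dist_eq_norm, lt_div_iff₀ hε, this, norm_smul, Real.norm_of_nonneg hε.le, mul_comm]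

lemma tdist_tr_lt_of_norm_sub_lt (hc : tr x c = z) (h : ‖ε • ξ - c‖ < r) :
    tdist (tr x (ε • ξ)) z < r := by
  rw [tr_eq_tr_sub hc]
  exact (tdist_tr_left_le _ _).trans_lt h

/-- With `ε, r ≤ 1/4` and `|c i| ≤ 1/2`, no coordinate of `ε • ξ - c` wraps around the circle. -/
lemma norm_sub_lt_of_tdist_tr_lt (hε0 : 0 ≤ ε) (hε : ε ≤ 1 / 4) (hr : r ≤ 1 / 4)
    (hc : tr x c = z) (hc2 : ∀ i, |c i| ≤ 1 / 2) (hξ : ‖ξ‖ ≤ 1)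
    (h : tdist (tr x (ε • ξ)) z < r) : ‖ε • ξ - c‖ < r := by
  rw [tr_eq_tr_sub hc] at h
  rwa [← tdist_tr_left_eq_norm_of_abs_add_lt z fun i => ?_]
  have hξi : |ξ i| ≤ 1 := by simpa using (PiLp.norm_apply_le ξ i).trans hξ
  have : |(ε • ξ - c) i| ≤ ε * |ξ i| + |c i| := by
    simpa [abs_mul, abs_of_nonneg hε0] using abs_sub (ε * ξ i) (c i)
  nlinarith [hc2 i]

end Slices

section UnifBall

variable {d : ℕ}

instance (d : ℕ) : IsProbabilityMeasure (unifBall d) :=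
  ⟨by rw [unifBall, Measure.smul_apply, Measure.restrict_apply_univ, smul_eq_mul,
    ENNReal.inv_mul_cancel (measure_closedBall_pos _ _ one_pos).ne' measure_closedBall_lt_top.ne]⟩

lemma unifBall_apply (s : Set (EuclideanSpace ℝ (Fin d))) :
    unifBall d s = (volume (closedBall (0 : EuclideanSpace ℝ (Fin d)) 1))⁻¹ *
      volume (s ∩ closedBall 0 1) := by
  rw [unifBall, Measure.smul_apply, Measure.restrict_apply' measurableSet_closedBall, smul_eq_mul]

lemma inv_volume_closedBall_mul_volume_ball (hd : 0 < d) (c : EuclideanSpace ℝ (Fin d))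
    {ρ : ℝ} (hρ : 0 ≤ ρ) :
    (volume (closedBall (0 : EuclideanSpace ℝ (Fin d)) 1))⁻¹ * volume (ball c ρ) =
      ENNReal.ofReal (ρ ^ d) := by
  have : Nonempty (Fin d) := ⟨⟨0, hd⟩⟩
  rw [Measure.addHaar_ball volume c hρ, finrank_euclideanSpace_fin,
    ← Measure.addHaar_closedBall_eq_addHaar_ball, mul_left_comm,
    ENNReal.inv_mul_cancel (measure_closedBall_pos _ _ one_pos).ne' measure_closedBall_lt_top.ne,
    mul_one]

lemma unifBall_le_of_inter_subset_ball (hd : 0 < d) {s : Set (EuclideanSpace ℝ (Fin d))}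
    {c : EuclideanSpace ℝ (Fin d)} {ρ : ℝ} (hρ : 0 ≤ ρ) (h : s ∩ closedBall 0 1 ⊆ ball c ρ) :
    unifBall d s ≤ ENNReal.ofReal (ρ ^ d) := by
  rw [unifBall_apply, ← inv_volume_closedBall_mul_volume_ball hd c hρ]
  gcongr

lemma le_unifBall_of_ball_subset (hd : 0 < d) {s : Set (EuclideanSpace ℝ (Fin d))}
    {c : EuclideanSpace ℝ (Fin d)} {ρ : ℝ} (hρ : 0 ≤ ρ) (h : ball c ρ ⊆ s ∩ closedBall 0 1) :
    ENNReal.ofReal (ρ ^ d) ≤ unifBall d s := by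
  rw [unifBall_apply, ← inv_volume_closedBall_mul_volume_ball hd c hρ]
  gcongr

end UnifBall

section SliceMeasure

variable {d : ℕ} {ε r : ℝ}

lemma unifBall_slice_le (hd : 0 < d) (hε0 : 0 < ε) (hε : ε ≤ 1 / 4) (hr0 : 0 ≤ r)
    (hr : r ≤ 1 / 4) (x z : Torus d) :
    unifBall d {ξ | tdist (tr x (ε • ξ)) z < r} ≤
      (tball z (ε + r)).indicator (fun _ => ENNReal.ofReal ((r / ε) ^ d)) x := by
  obtain ⟨c, hc, hc2, hcx⟩ := exists_tr_eq x z
  have hsub : {ξ | tdist (tr x (ε • ξ)) z < r} ∩ closedBall 0 1 ⊆ ball (ε⁻¹ • c) (r / ε) :=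
    fun ξ ⟨h, hξ⟩ => (mem_ball_inv_smul_iff hε0).2 <|
      norm_sub_lt_of_tdist_tr_lt hε0.le hε hr hc hc2 (mem_closedBall_zero_iff.1 hξ) h
  by_cases hx : x ∈ tball z (ε + r)
  · rw [indicator_of_mem hx]
    exact unifBall_le_of_inter_subset_ball hd (by positivity) hsub
  · have hempty : {ξ | tdist (tr x (ε • ξ)) z < r} ∩ closedBall 0 1 = ∅ := by
      refine eq_empty_of_forall_notMem fun ξ hξ => hx ?_
      have hsc := (mem_ball_inv_smul_iff hε0).1 (hsub hξ)
      have hεξ : ‖ε • ξ‖ ≤ ε := by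
        rw [norm_smul, Real.norm_of_nonneg hε0.le]
        exact mul_le_of_le_one_right hε0.le (mem_closedBall_zero_iff.1 hξ.2)
      show tdist x z < ε + r
      linarith [norm_le_norm_sub_add c (ε • ξ), norm_sub_rev c (ε • ξ)]
    rw [indicator_of_notMem hx, unifBall_apply, hempty, measure_empty, mul_zero]

lemma indicator_le_unifBall_slice (hd : 0 < d) (hε0 : 0 < ε) (hr0 : 0 ≤ r) (x z : Torus d) :
    (tball z (ε - r)).indicator (fun _ => ENNReal.ofReal ((r / ε) ^ d)) x ≤
      unifBall d {ξ | tdist (tr x (ε • ξ)) z < r} := by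
  by_cases hx : x ∈ tball z (ε - r)
  · rw [indicator_of_mem hx]
    obtain ⟨c, hc, -, hcx⟩ := exists_tr_eq x z
    refine le_unifBall_of_ball_subset hd (c := ε⁻¹ • c) (by positivity) fun ξ hξ => ?_
    rw [mem_ball_inv_smul_iff hε0] at hξ
    refine ⟨tdist_tr_lt_of_norm_sub_lt hc hξ, mem_closedBall_zero_iff.2 ?_⟩
    have hx' : ‖c‖ < ε - r := hcx ▸ hx
    have : ‖ε • ξ‖ < ε := by linarith [norm_le_norm_sub_add (ε • ξ) c]
    rw [norm_smul, Real.norm_of_nonneg hε0.le] at this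
    exact ((mul_lt_iff_lt_one_right hε0).1 this).le
  · rw [indicator_of_notMem hx]
    exact zero_le

end SliceMeasure

section ProductMeasure

variable {d : ℕ}

lemma continuous_tdist_left (z : Torus d) : Continuous fun x : Torus d => tdist x z :=
  (continuous_finsetSum _ fun i _ => ((continuous_apply i).dist continuous_const).pow 2).sqrt

lemma continuous_tr : Continuous fun p : Torus d × EuclideanSpace ℝ (Fin d) => tr p.1 p.2 :=
  continuous_pi fun i => ((continuous_apply i).comp continuous_fst).add <|
    (AddCircle.continuous_mk' 1).comp ((EuclideanSpace.proj i).continuous.comp continuous_snd)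

lemma isOpen_tball (z : Torus d) (s : ℝ) : IsOpen (tball z s) :=
  isOpen_lt (continuous_tdist_left z) continuous_const

lemma isOpen_setOf_tdist_tr_smul_lt (z : Torus d) (ε r : ℝ) :
    IsOpen {p : Torus d × EuclideanSpace ℝ (Fin d) | tdist (tr p.1 (ε • p.2)) z < r} :=
  isOpen_lt ((continuous_tdist_left z).comp <|
    continuous_tr.comp (continuous_fst.prodMk (continuous_snd.const_smul ε))) continuous_const

variable (ν : Measure (Torus d)) (z : Torus d) {ε r : ℝ}

lemma le_prod_unifBall (hd : 0 < d) (hε0 : 0 < ε) (hr0 : 0 ≤ r) :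
    ENNReal.ofReal ((r / ε) ^ d) * ν (tball z (ε - r)) ≤
      ν.prod (unifBall d) {p | tdist (tr p.1 (ε • p.2)) z < r} := by
  rw [Measure.prod_apply (isOpen_setOf_tdist_tr_smul_lt z ε r).measurableSet,
    ← lintegral_indicator_const (isOpen_tball z _).measurableSet]
  exact lintegral_mono fun x => indicator_le_unifBall_slice hd hε0 hr0 x z

lemma prod_unifBall_le (hd : 0 < d) (hε0 : 0 < ε) (hε : ε ≤ 1 / 4) (hr0 : 0 ≤ r)
    (hr : r ≤ 1 / 4) :
    ν.prod (unifBall d) {p | tdist (tr p.1 (ε • p.2)) z < r} ≤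
      ENNReal.ofReal ((r / ε) ^ d) * ν (tball z (ε + r)) := by
  rw [Measure.prod_apply (isOpen_setOf_tdist_tr_smul_lt z ε r).measurableSet,
    ← lintegral_indicator_const (isOpen_tball z _).measurableSet]
  exact lintegral_mono fun x => unifBall_slice_le hd hε0 hε hr0 hr x z

lemma toReal_prod_unifBall_mem_Icc [IsFiniteMeasure ν] (hd : 0 < d) (hε0 : 0 < ε)
    (hε : ε ≤ 1 / 4) (hr0 : 0 ≤ r) (hr : r ≤ 1 / 4) :
    (ν.prod (unifBall d) {p | tdist (tr p.1 (ε • p.2)) z < r}).toReal ∈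
      Icc ((r / ε) ^ d * (ν (tball z (ε - r))).toReal)
        ((r / ε) ^ d * (ν (tball z (ε + r))).toReal) := by
  have hpow : 0 ≤ (r / ε) ^ d := by positivity
  constructor
  · simpa only [ENNReal.toReal_mul, ENNReal.toReal_ofReal hpow] using
      ENNReal.toReal_mono (measure_ne_top _ _) (le_prod_unifBall ν z hd hε0 hr0)
  · simpa only [ENNReal.toReal_mul, ENNReal.toReal_ofReal hpow] using
      ENNReal.toReal_mono (by finiteness) (prod_unifBall_le ν z hd hε0 hε hr0 hr)

end ProductMeasure

lemma tendsto_measure_setOf_lt {α : Type*} [MeasurableSpace α] {μ : Measure α}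
    [IsFiniteMeasure μ] {f : α → ℝ} (hf : Measurable f) {a : ℝ} (ha : μ {x | f x = a} = 0) :
    Tendsto (fun s => μ {x | f x < s}) (𝓝 a) (𝓝 (μ {x | f x < a})) := by
  refine tendsto_measure_of_ae_tendsto_indicator_of_isFiniteMeasure _
    (measurableSet_lt hf measurable_const) (fun _ => measurableSet_lt hf measurable_const) ?_
  filter_upwards [measure_eq_zero_iff_ae_notMem.1 ha] with x hx
  rcases lt_or_gt_of_ne (show f x ≠ a from hx) with hlt | hgt
  · filter_upwards [lt_mem_nhds hlt] with s hs
    exact iff_of_true hs hlt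
  · filter_upwards [gt_mem_nhds hgt] with s hs
    exact iff_of_false (not_lt.2 hs.le) (not_lt.2 hgt.le)

section Normalization

variable {d : ℕ} {b ε : ℝ}

lemma mul_exp_normalizer_div_pow (hd : d ≠ 0) {m : ℝ} (hm : 0 < m) (hb : 0 < b) (hε : 0 < ε)
    (u : ℝ) : m * (Real.exp (-(u / d + 1 / d * Real.log (m * b / ε ^ d))) / ε) ^ d =
      Real.exp (-u) / b := by
  have hq : 0 < m * b / ε ^ d := by positivity
  have hexp : Real.exp (-(u / d + 1 / d * Real.log (m * b / ε ^ d))) ^ d =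
      Real.exp (-u) / (m * b / ε ^ d) := by
    rw [← Real.exp_nat_mul, ← Real.exp_log hq, ← Real.exp_sub, Real.log_exp]
    congr 1
    field_simp
    ring
  rw [div_pow, hexp]
  field_simp

lemma tendsto_exp_normalizer (hd : 0 < d) (hb : 0 < b) (hε : 0 < ε) (u : ℝ) :
    Tendsto (fun m : ℕ => Real.exp (-(u / d + 1 / d * Real.log (m * b / ε ^ d)))) atTop
      (𝓝 0) :=
  Real.tendsto_exp_atBot.comp <| tendsto_neg_atTop_atBot.comp <|
    tendsto_atTop_add_const_left _ _ <|
      (Real.tendsto_log_atTop.comp <|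
        (tendsto_natCast_atTop_atTop.atTop_mul_const hb).atTop_div_const (by positivity)
        ).const_mul_atTop (by positivity)

end Normalization

/-- On the `d`-torus, with `θ` uniform on the closed unit ball `S`,
`ε ∈ (0, 1/4]`, `ν(B(z,ε)) > 0` and `ν{dist(·,z) = ε} = 0`, setting
`b_m = (1/d) log(m ν(B(z,ε))/ε^d)` and `u_m = u/d + b_m`, one has
`m · (ν⊗θ){dist(x+εξ, z) < e^{−u_m}} → e^{−u}`, so the normalizing sequence has
scale `a_m = d` and location `b_m`. -/
theorem statement_6 {d : ℕ} (hd : 1 ≤ d)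
    (ν : Measure (Torus d)) [IsProbabilityMeasure ν]
    (z : Torus d) (ε : ℝ) (hε0 : 0 < ε) (hε : ε ≤ 1 / 4)
    (hpos : 0 < ν (tball z ε))
    (hbd : ν {x | tdist x z = ε} = 0)
    (u : ℝ) :
    Tendsto (fun m : ℕ =>
        (m : ℝ) * ((ν.prod (unifBall d)) {p : Torus d × EuclideanSpace ℝ (Fin d) |
          tdist (tr p.1 (ε • p.2)) z <
            Real.exp (-(u / d + (1 / d) *
              Real.log ((m : ℝ) * (ν (tball z ε)).toReal / ε ^ d)))}).toReal)
      atTop (𝓝 (Real.exp (-u))) := by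
  set b := (ν (tball z ε)).toReal
  have hb : 0 < b := ENNReal.toReal_pos hpos.ne' (measure_ne_top ν _)
  set r : ℕ → ℝ := fun m => Real.exp (-(u / d + 1 / d * Real.log (m * b / ε ^ d)))
  have hr : Tendsto r atTop (𝓝 0) := tendsto_exp_normalizer hd hb hε0 u
  have hlim {s : ℕ → ℝ} (hs : Tendsto s atTop (𝓝 ε)) :
      Tendsto (fun m => Real.exp (-u) / b * (ν (tball z (s m))).toReal) atTop
        (𝓝 (Real.exp (-u))) := by
    have hν : Tendsto (fun m => (ν (tball z (s m))).toReal) atTop (𝓝 b) :=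
      (ENNReal.tendsto_toReal (measure_ne_top ν _)).comp <|
        (tendsto_measure_setOf_lt (continuous_tdist_left z).measurable hbd).comp hs
    simpa [div_mul_cancel₀ _ hb.ne'] using hν.const_mul (Real.exp (-u) / b)
  have hbounds : ∀ᶠ m : ℕ in atTop, (m : ℝ) * (ν.prod (unifBall d)
      {p | tdist (tr p.1 (ε • p.2)) z < r m}).toReal ∈
        Icc (Real.exp (-u) / b * (ν (tball z (ε - r m))).toReal)
          (Real.exp (-u) / b * (ν (tball z (ε + r m))).toReal) := by
    filter_upwards [eventually_gt_atTop 0,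
      hr.eventually (ge_mem_nhds (show (0 : ℝ) < 1 / 4 by norm_num))] with m hm hr4
    obtain ⟨hlo, hhi⟩ := toReal_prod_unifBall_mem_Icc ν z hd hε0 hε (Real.exp_pos _).le hr4
    rw [← mul_exp_normalizer_div_pow (Nat.one_le_iff_ne_zero.1 hd) (Nat.cast_pos.2 hm) hb hε0 u,
      mul_assoc, mul_assoc]
    exact ⟨by gcongr, by gcongr⟩
  exact tendsto_of_tendsto_of_tendsto_of_le_of_le'
    (hlim (by simpa using tendsto_const_nhds.sub hr))
    (hlim (by simpa using tendsto_const_nhds.add hr))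
    (hbounds.mono fun _ h => h.1) (hbounds.mono fun _ h => h.2)

end
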